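/- One-step contraction for convex stochastic optimization under generalized Lipschitz continuity: Let x ∈ ℝⁿ be fixed, γ > 0 independent of the sample, and let x⁺(ξ) = argmin_y { f_x(y,ξ) + ω(y) + (γ/2)‖y − x‖² } for ξ ∼ Ξ. Then for any optimal solution x* of min ψ, E_ξ[‖x⁺(ξ) − x*‖²] ≤ ‖x − x*‖² − (2/γ)[ψ(x) − ψ(x*)] + (𝒢(‖x‖)L_f + L_ω)²/γ². -/

import Mathlib

/-!
For each sample, `y ↦ f_x(y, ξ) + ω(y) + γ/2 ‖y - x‖²` is `γ`-strongly convex, so its minimizer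
`x⁺(ξ)` beats every `z` by `γ/2 ‖z - x⁺(ξ)‖²`. Taking `z = x*`, the remaining loss
`F(x) - F(x⁺(ξ)) ≤ (L_f(ξ) 𝒢(‖x‖) + L_ω) ‖x⁺(ξ) - x‖` is absorbed into the proximal term by Young's
inequality. Taking expectations, `E[f_x(x*, ξ)] ≤ f(x*)`, `E[f_x(x, ξ)] = f(x)`, and
`E[(L_f(ξ) 𝒢 + L_ω)²] ≤ (𝒢 L_f + L_ω)²` because `E[L_f(ξ)] ≤ L_f` by Jensen.
-/

open MeasureTheory Set Filter Topology

section Prox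

variable {E : Type*} [NormedAddCommGroup E] [InnerProductSpace ℝ E]

lemma ConvexOn.strongConvexOn_add_sq_norm_sub {g : E → ℝ} (hg : ConvexOn ℝ univ g)
    (m : ℝ) (x : E) : StrongConvexOn univ m fun y ↦ g y + m / 2 * ‖y - x‖ ^ 2 := by
  rw [strongConvexOn_iff_convex]
  -- `‖y - x‖² - ‖y‖² = ‖x‖² - 2⟪x, y⟫` is affine in `y`.
  have hlin : ConvexOn ℝ univ fun y : E ↦ inner ℝ x y • (-m) :=
    ((innerₗ E x).smulRight (-m)).convexOn convex_univ
  refine ((hg.add hlin).add_const (m / 2 * ‖x‖ ^ 2)).congr fun y _ ↦ ?_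
  simp only [Pi.add_apply, norm_sub_sq_real, smul_eq_mul, real_inner_comm x y]
  ring

lemma StrongConvexOn.add_sq_norm_sub_le_of_isMinOn {s : Set E} {m : ℝ} {h : E → ℝ}
    (hh : StrongConvexOn s m h) {p y : E} (hp : IsMinOn h s p) (hps : p ∈ s) (hys : y ∈ s) :
    h p + m / 2 * ‖y - p‖ ^ 2 ≤ h y := by
  have hcut : ∀ t ∈ Ioo (0 : ℝ) 1, h p + (1 - t) * (m / 2 * ‖y - p‖ ^ 2) ≤ h y := by
    rintro t ⟨ht0, ht1⟩
    have hmin := hp (hh.1 hps hys (sub_nonneg.2 ht1.le) ht0.le (sub_add_cancel 1 t))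
    have hconv := hh.2 hps hys (sub_nonneg.2 ht1.le) ht0.le (sub_add_cancel 1 t)
    rw [norm_sub_rev] at hconv
    simp only [smul_eq_mul, mem_ofPred_eq] at hconv hmin
    nlinarith
  have hcont : Continuous fun t : ℝ ↦ h p + (1 - t) * (m / 2 * ‖y - p‖ ^ 2) := by fun_prop
  have hlim := (hcont.tendsto' 0 (h p + m / 2 * ‖y - p‖ ^ 2) (by simp)).mono_left
    (nhdsWithin_le_nhds (s := Ioi 0))
  exact le_of_tendsto hlim (eventually_of_mem (Ioo_mem_nhdsGT one_pos) hcut)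

lemma ConvexOn.norm_prox_sub_sq_le {F : E → ℝ} (hF : ConvexOn ℝ univ F) {γ a : ℝ}
    (hγ : 0 < γ) {x p : E} (hp : IsMinOn (fun y ↦ F y + γ / 2 * ‖y - x‖ ^ 2) univ p)
    (hFx : F x - F p ≤ a * ‖p - x‖) (z : E) :
    γ / 2 * ‖p - z‖ ^ 2 ≤ F z - F x + γ / 2 * ‖x - z‖ ^ 2 + a ^ 2 / (2 * γ) := by
  have hgrowth := (hF.strongConvexOn_add_sq_norm_sub γ x).add_sq_norm_sub_le_of_isMinOn hp
    (mem_univ p) (mem_univ z)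
  have hyoung : a * ‖p - x‖ ≤ γ / 2 * ‖p - x‖ ^ 2 + a ^ 2 / (2 * γ) := by
    have : 0 ≤ (γ * ‖p - x‖ - a) ^ 2 / (2 * γ) := by positivity
    have hexp : (γ * ‖p - x‖ - a) ^ 2 / (2 * γ)
        = γ / 2 * ‖p - x‖ ^ 2 + a ^ 2 / (2 * γ) - a * ‖p - x‖ := by
      field_simp; ring
    linarith
  rw [norm_sub_rev z p, norm_sub_rev z x] at hgrowth
  linarith

lemma norm_prox_sub_sq_le_of_lipschitz {m w : E → ℝ} (hm : ConvexOn ℝ univ m)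
    (hw : ConvexOn ℝ univ w) {γ Lm Lw : ℝ} (hγ : 0 < γ) {x p : E}
    (hp : ∀ y, m p + w p + γ / 2 * ‖p - x‖ ^ 2 ≤ m y + w y + γ / 2 * ‖y - x‖ ^ 2)
    (hm_lip : m x - m p ≤ Lm * ‖x - p‖) (hw_lip : |w x - w p| ≤ Lw * ‖x - p‖) (z : E) :
    γ / 2 * ‖p - z‖ ^ 2
      ≤ m z - m x + (Lm + Lw) ^ 2 / (2 * γ) + (w z - w x + γ / 2 * ‖x - z‖ ^ 2) := by
  have hloss : (m + w) x - (m + w) p ≤ (Lm + Lw) * ‖p - x‖ := by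
    rw [norm_sub_rev] at hm_lip hw_lip
    simp only [Pi.add_apply]
    linarith [(abs_le.1 hw_lip).2]
  have := (hm.add hw).norm_prox_sub_sq_le hγ (isMinOn_univ_iff.2 hp) hloss z
  simp only [Pi.add_apply] at this
  linarith

end Prox

section Moments

variable {Ω : Type*} [MeasurableSpace Ω] {μ : Measure Ω} {X : Ω → ℝ}

lemma memLp_two_of_nonneg_of_integrable_sq (hX : ∀ ω, 0 ≤ X ω)
    (hX2 : Integrable (fun ω ↦ X ω ^ 2) μ) : MemLp X 2 μ := by
  have hmeas : AEStronglyMeasurable X μ := by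
    simpa only [Real.sqrt_sq (hX _)] using
      Real.continuous_sqrt.comp_aestronglyMeasurable hX2.aestronglyMeasurable
  exact (memLp_two_iff_integrable_sq hmeas).2 hX2

variable [IsProbabilityMeasure μ]

lemma integral_le_of_integral_sq_le (hX : MemLp X 2 μ) {M : ℝ} (hM : 0 ≤ M)
    (hX2 : ∫ ω, X ω ^ 2 ∂μ ≤ M ^ 2) : ∫ ω, X ω ∂μ ≤ M := by
  have hvar := ProbabilityTheory.variance_nonneg X μ
  rw [ProbabilityTheory.variance_eq_sub hX] at hvar
  exact abs_le_of_sq_le_sq' (by simp only [Pi.pow_apply] at hvar; linarith) hM |>.2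

lemma integral_mul_add_sq_le (hX : MemLp X 2 μ) {a b M : ℝ} (ha : 0 ≤ a) (hb : 0 ≤ b)
    (hM : 0 ≤ M) (hX2 : ∫ ω, X ω ^ 2 ∂μ ≤ M ^ 2) :
    ∫ ω, (X ω * a + b) ^ 2 ∂μ ≤ (a * M + b) ^ 2 := by
  have hX1 : Integrable X μ := hX.integrable one_le_two
  have hsq : Integrable (fun ω ↦ X ω ^ 2) μ := hX.integrable_sq
  have hexpand : ∫ ω, (X ω * a + b) ^ 2 ∂μ
      = a ^ 2 * ∫ ω, X ω ^ 2 ∂μ + 2 * a * b * ∫ ω, X ω ∂μ + b ^ 2 := by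
    simp_rw [show ∀ ω, (X ω * a + b) ^ 2 = a ^ 2 * X ω ^ 2 + 2 * a * b * X ω + b ^ 2 by
      intro ω; ring]
    have hlin : Integrable (fun ω ↦ a ^ 2 * X ω ^ 2 + 2 * a * b * X ω) μ :=
      (hsq.const_mul _).add (hX1.const_mul _)
    rw [integral_add hlin (integrable_const _),
      integral_add (hsq.const_mul _) (hX1.const_mul _), integral_const_mul, integral_const_mul,
      integral_const, smul_eq_mul, probReal_univ, one_mul]
  have hmean := integral_le_of_integral_sq_le hX hM hX2
  rw [hexpand]
  nlinarith [mul_le_mul_of_nonneg_left hX2 (sq_nonneg a),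
    mul_le_mul_of_nonneg_left hmean (mul_nonneg (mul_nonneg zero_le_two ha) hb)]

end Moments

theorem convex_one_step_generalized_lipschitz_general
    {n : ℕ} {S : Type*} [MeasurableSpace S] (μ : Measure S) [IsProbabilityMeasure μ]
    (f w ψ : EuclideanSpace ℝ (Fin n) → ℝ)
    (fmod : EuclideanSpace ℝ (Fin n) → EuclideanSpace ℝ (Fin n) → S → ℝ)
    (Lfs : S → ℝ) (G : ℝ → ℝ) (γ Lf Lw : ℝ)
    -- basic parameter assumptions
    (hγ : 0 < γ) (hLf : 0 ≤ Lf) (hLw : 0 ≤ Lw)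
    -- convex composite objective
    (hψdef : ∀ x, ψ x = f x + w x)
    (hw_conv : ConvexOn ℝ Set.univ w)
    (hw_lip : ∀ x y, |w x - w y| ≤ Lw * ‖x - y‖)
    -- properties of the stochastic model (with τ = 0)
    (hmodel_conv : ∀ x s, ConvexOn ℝ Set.univ (fun y => fmod x y s))
    (hmodel_int : ∀ x y, Integrable (fun s => fmod x y s) μ)
    (hmodel_center : ∀ x, ∫ s, fmod x x s ∂μ = f x)
    (hmodel_under : ∀ x y, ∫ s, fmod x y s ∂μ ≤ f y)
    -- C1: generalized Lipschitz continuity with growth function 𝒢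
    (hG_nonneg : ∀ t, 0 ≤ G t)
    (hC1 : ∀ x y z s, fmod x y s - fmod x z s ≤ Lfs s * G ‖x‖ * ‖y - z‖)
    (hLfs_nonneg : ∀ s, 0 ≤ Lfs s)
    (hLfs_int : Integrable (fun s => Lfs s ^ 2) μ)
    (hLfs_bound : ∫ s, Lfs s ^ 2 ∂μ ≤ Lf ^ 2)
    -- an optimal solution
    (xstar : EuclideanSpace ℝ (Fin n))
    -- the current point and the stochastic one-step update
    (x : EuclideanSpace ℝ (Fin n)) (xplus : S → EuclideanSpace ℝ (Fin n))
    (hupdate : ∀ s y,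
      fmod x (xplus s) s + w (xplus s) + γ / 2 * ‖xplus s - x‖ ^ 2
        ≤ fmod x y s + w y + γ / 2 * ‖y - x‖ ^ 2)
    (hint : Integrable (fun s => ‖xplus s - xstar‖ ^ 2) μ) :
    ∫ s, ‖xplus s - xstar‖ ^ 2 ∂μ
      ≤ ‖x - xstar‖ ^ 2 - 2 / γ * (ψ x - ψ xstar)
        + (G ‖x‖ * Lf + Lw) ^ 2 / γ ^ 2 := by
  set L : S → ℝ := fun s ↦ Lfs s * G ‖x‖ + Lw
  have hstep : ∀ s, γ / 2 * ‖xplus s - xstar‖ ^ 2 ≤ (fmod x xstar s - fmod x x s)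
      + L s ^ 2 / (2 * γ) + (w xstar - w x + γ / 2 * ‖x - xstar‖ ^ 2) := fun s ↦
    norm_prox_sub_sq_le_of_lipschitz (hmodel_conv x s) hw_conv hγ (hupdate s)
      (hC1 x x (xplus s) s) (hw_lip x (xplus s)) xstar
  have hLfs : MemLp Lfs 2 μ := memLp_two_of_nonneg_of_integrable_sq hLfs_nonneg hLfs_int
  have hL2int : Integrable (fun s ↦ L s ^ 2) μ :=
    ((hLfs.mul_const (G ‖x‖)).add (memLp_const Lw)).integrable_sq
  have hL2 : ∫ s, L s ^ 2 ∂μ ≤ (G ‖x‖ * Lf + Lw) ^ 2 :=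
    integral_mul_add_sq_le hLfs (hG_nonneg _) hLw hLf hLfs_bound
  have hgap : Integrable (fun s ↦ fmod x xstar s - fmod x x s) μ :=
    (hmodel_int x xstar).sub (hmodel_int x x)
  have hsum : Integrable (fun s ↦ fmod x xstar s - fmod x x s + L s ^ 2 / (2 * γ)) μ :=
    hgap.add (hL2int.div_const _)
  have hmean : γ / 2 * ∫ s, ‖xplus s - xstar‖ ^ 2 ∂μ
      ≤ f xstar - f x + (G ‖x‖ * Lf + Lw) ^ 2 / (2 * γ)
        + (w xstar - w x + γ / 2 * ‖x - xstar‖ ^ 2) := calc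
    _ = ∫ s, γ / 2 * ‖xplus s - xstar‖ ^ 2 ∂μ := (integral_const_mul _ _).symm
    _ ≤ ∫ s, (fmod x xstar s - fmod x x s + L s ^ 2 / (2 * γ)
          + (w xstar - w x + γ / 2 * ‖x - xstar‖ ^ 2)) ∂μ :=
      integral_mono (hint.const_mul _) (hsum.add (integrable_const _)) hstep
    _ = (∫ s, fmod x xstar s ∂μ) - f x + (∫ s, L s ^ 2 ∂μ) / (2 * γ)
          + (w xstar - w x + γ / 2 * ‖x - xstar‖ ^ 2) := by
      rw [integral_add hsum (integrable_const _), integral_add hgap (hL2int.div_const _),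
        integral_sub (hmodel_int x xstar) (hmodel_int x x), integral_div, integral_const,
        hmodel_center, smul_eq_mul, probReal_univ, one_mul]
    _ ≤ _ := by gcongr; exact hmodel_under x xstar
  have hrhs : γ / 2 * (‖x - xstar‖ ^ 2 - 2 / γ * (ψ x - ψ xstar) + (G ‖x‖ * Lf + Lw) ^ 2 / γ ^ 2)
      = γ / 2 * ‖x - xstar‖ ^ 2 - (ψ x - ψ xstar) + (G ‖x‖ * Lf + Lw) ^ 2 / (2 * γ) := by
    field_simp
  refine le_of_mul_le_mul_left ?_ (half_pos hγ)
  rw [hrhs, hψdef, hψdef]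
  linarith

/-- **Lemma D.2** (one-step contraction for convex stochastic optimization under
generalized Lipschitz continuity, assumption C1).  For `γ > 0` (independent of the
sample) and `x⁺(ξ)` the minimizer of the regularized model at `x`,
`E_ξ[‖x⁺(ξ) - x*‖²] ≤ ‖x - x*‖² - (2/γ)[ψ(x) - ψ(x*)] + (𝒢(‖x‖)L_f + L_ω)²/γ²`. -/
theorem convex_one_step_generalized_lipschitz
    {n : ℕ} {S : Type*} [MeasurableSpace S] (μ : Measure S) [IsProbabilityMeasure μ]
    (f w ψ : EuclideanSpace ℝ (Fin n) → ℝ)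
    (fmod : EuclideanSpace ℝ (Fin n) → EuclideanSpace ℝ (Fin n) → S → ℝ)
    (Lfs : S → ℝ) (G : ℝ → ℝ) (γ Lf Lw : ℝ)
    -- basic parameter assumptions
    (hγ : 0 < γ) (hLf : 0 ≤ Lf) (hLw : 0 ≤ Lw)
    -- convex composite objective
    (hψdef : ∀ x, ψ x = f x + w x)
    (hf_conv : ConvexOn ℝ Set.univ f)
    (hw_conv : ConvexOn ℝ Set.univ w)
    (hw_lip : ∀ x y, |w x - w y| ≤ Lw * ‖x - y‖)
    -- properties of the stochastic model (with τ = 0)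
    (hmodel_conv : ∀ x s, ConvexOn ℝ Set.univ (fun y => fmod x y s))
    (hmodel_int : ∀ x y, Integrable (fun s => fmod x y s) μ)
    (hmodel_center : ∀ x, ∫ s, fmod x x s ∂μ = f x)
    (hmodel_under : ∀ x y, ∫ s, fmod x y s ∂μ ≤ f y)
    -- C1: generalized Lipschitz continuity with growth function 𝒢
    (hG_nonneg : ∀ t, 0 ≤ G t) (hG_mono : Monotone G) (hG_cont : Continuous G)
    (hC1 : ∀ x y z s, fmod x y s - fmod x z s ≤ Lfs s * G ‖x‖ * ‖y - z‖)
    (hLfs_nonneg : ∀ s, 0 ≤ Lfs s)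
    (hLfs_int : Integrable (fun s => Lfs s ^ 2) μ)
    (hLfs_bound : ∫ s, Lfs s ^ 2 ∂μ ≤ Lf ^ 2)
    -- an optimal solution
    (xstar : EuclideanSpace ℝ (Fin n)) (hxstar : ∀ y, ψ xstar ≤ ψ y)
    -- the current point and the stochastic one-step update
    (x : EuclideanSpace ℝ (Fin n)) (xplus : S → EuclideanSpace ℝ (Fin n))
    (hupdate : ∀ s y,
      fmod x (xplus s) s + w (xplus s) + γ / 2 * ‖xplus s - x‖ ^ 2
        ≤ fmod x y s + w y + γ / 2 * ‖y - x‖ ^ 2)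
    (hint : Integrable (fun s => ‖xplus s - xstar‖ ^ 2) μ) :
    ∫ s, ‖xplus s - xstar‖ ^ 2 ∂μ
      ≤ ‖x - xstar‖ ^ 2 - 2 / γ * (ψ x - ψ xstar)
        + (G ‖x‖ * Lf + Lw) ^ 2 / γ ^ 2 :=
  convex_one_step_generalized_lipschitz_general μ f w ψ fmod Lfs G γ Lf Lw hγ hLf hLw hψdef hw_conv
    hw_lip hmodel_conv hmodel_int hmodel_center hmodel_under hG_nonneg hC1 hLfs_nonneg hLfs_int
    hLfs_bound xstar x xplus hupdate hint
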